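/- Fairness excludes starvation in the motivating four-reaction system: Let the species be A, B, C, D and let P consist of the four reactions R1 = ({A},{B},{D}), R2 = ({B},{A},{D}), R3 = ({A},{C},{D}), R4 = ({C},{A},{D}) (each written (reactants, products, catalysts)). With initial state {A, D}: (i) every maximal path of LTS(P) from {A, D} is infinite; (ii) there exists an infinite maximal path from {A, D} in which no step is labelled R3; (iii) every fair maximal path from {A, D} has infinitely many steps labelled R1 and infinitely many steps labelled R3. -/

import Mathlib

open scoped Classical

/-- A reaction: a triple of finite sets of species (reactants, products, catalysts). -/
structure Reaction (S : Type*) where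
  re : Finset S
  pro : Finset S
  cat : Finset S

namespace Reaction
/-- The species involved in a reaction. -/
def speciesSet {S : Type*} (R : Reaction S) : Set S := ↑R.re ∪ ↑R.pro ∪ ↑R.cat
end Reaction

variable {S I : Type*}

/-- A reaction is enabled at a state. -/
def enabled (R : Reaction S) (s : Set S) : Prop :=
  ↑R.re ⊆ s ∧ ¬ (↑R.pro : Set S) ⊆ s ∧ ↑R.cat ⊆ s

/-- The transition relation of the LTS: rule (cat) and rule (no-cat). -/
def Step (R : Reaction S) (s s' : Set S) : Prop :=
  (↑R.re ⊆ s ∧ ¬ (↑R.pro : Set S) ⊆ s ∧ R.cat ≠ ∅ ∧ ↑R.cat ⊆ s ∧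
      s' = (s \ ↑R.re) ∪ ↑R.pro) ∨
  (↑R.re ⊆ s ∧ ¬ (↑R.pro : Set S) ⊆ s ∧ R.cat = ∅ ∧ s' = s ∪ ↑R.pro)

/-- The species of a pathway. -/
def pathwaySpecies (P : Finset (Reaction S)) : Set S := ⋃ R ∈ P, R.speciesSet

/-- The set of components of a reaction: the image of its species under `comp`. -/
def compSet (comp : S → I) (R : Reaction S) : Set I := comp '' R.speciesSet

/-- species(J): all species of reactions having some component in J. -/
def speciesJ (P : Finset (Reaction S)) (comp : S → I) (J : Set I) : Set S :=
  {s | ∃ R ∈ P, (compSet comp R ∩ J).Nonempty ∧ s ∈ R.speciesSet}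

/-- Projection of a set of species onto J. -/
def projSet (P : Finset (Reaction S)) (comp : S → I) (J : Set I) (u : Set S) : Set S :=
  u ∩ speciesJ P comp J

/-- Projection of a finite set of species onto J. -/
noncomputable def projFin (P : Finset (Reaction S)) (comp : S → I) (J : Set I)
    (u : Finset S) : Finset S :=
  u.filter (· ∈ speciesJ P comp J)

/-- PR: the reactions of P all of whose components are in J. -/
def PR (P : Finset (Reaction S)) (comp : S → I) (J : Set I) : Set (Reaction S) :=
  {R | R ∈ P ∧ compSet comp R ⊆ J}

/-- The projected version of a reaction. -/
noncomputable def projReaction (P : Finset (Reaction S)) (comp : S → I) (J : Set I)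
    (R : Reaction S) : Reaction S :=
  ⟨projFin P comp J R.re, projFin P comp J R.pro, projFin P comp J R.cat⟩

/-- The self-loop version of a projected reaction. -/
noncomputable def loopReaction (P : Finset (Reaction S)) (comp : S → I) (J : Set I)
    (R : Reaction S) : Reaction S :=
  ⟨projFin P comp J R.re, projFin P comp J R.re, projFin P comp J R.cat⟩

/-- AR: the abstract reactions coming from reactions crossing the boundary of J. -/
def AR (P : Finset (Reaction S)) (comp : S → I) (J : Set I) : Set (Reaction S) :=
  {R' | ∃ R ∈ P, (compSet comp R ∩ J).Nonempty ∧ (compSet comp R ∩ Jᶜ).Nonempty ∧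
        (R' = projReaction P comp J R ∨ R' = loopReaction P comp J R)}

/-- A finite or infinite alternating sequence of states and (optional) reaction labels.
`len` is the number of steps (`⊤` for infinite); states live at positions `≤ len`,
labels at positions `< len`.  A label `none` denotes a stuttering step `*`. -/
structure RPath (S : Type*) where
  len : ℕ∞
  state : ℕ → Set S
  label : ℕ → Option (Reaction S)

/-- π is a path of the LTS of the set of reactions Q. -/
def IsPath (Q : Set (Reaction S)) (π : RPath S) : Prop :=
  ∀ i : ℕ, (i : ℕ∞) < π.len →
    ∃ R, π.label i = some R ∧ R ∈ Q ∧ Step R (π.state i) (π.state (i + 1))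

/-- π is a maximal path of the LTS of Q. -/
def IsMaximal (Q : Set (Reaction S)) (π : RPath S) : Prop :=
  IsPath Q π ∧
    (π.len = ⊤ ∨ ∃ n : ℕ, π.len = (n : ℕ∞) ∧ ∀ R ∈ Q, ¬ enabled R (π.state n))

/-- Fairness with respect to the reactions in Q: every reaction of Q enabled at
infinitely many positions occurs at infinitely many steps. -/
def FairFor (Q : Set (Reaction S)) (π : RPath S) : Prop :=
  ∀ R ∈ Q, {i : ℕ | (i : ℕ∞) ≤ π.len ∧ enabled R (π.state i)}.Infinite →
    {i : ℕ | (i : ℕ∞) < π.len ∧ π.label i = some R}.Infinite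
/-- Step i of π is kept by the projection onto J. -/
def keptStep (comp : S → I) (J : Set I) (π : RPath S) (i : ℕ) : Prop :=
  (i : ℕ∞) < π.len ∧ ∃ R, π.label i = some R ∧ (compSet comp R ∩ J).Nonempty

/-- The projection π↾J of a path: steps labelled by reactions with no component in J
are deleted and the remaining states are projected onto J. -/
noncomputable def projPath (P : Finset (Reaction S)) (comp : S → I) (J : Set I)
    (π : RPath S) : RPath S :=
  if {i | keptStep comp J π i}.Infinite then
    ⟨⊤, fun n => projSet P comp J (π.state (Nat.nth (keptStep comp J π) n)),
        fun n => π.label (Nat.nth (keptStep comp J π) n)⟩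
  else
    let m := {i | keptStep comp J π i}.ncard
    let endIdx : ℕ :=
      if π.len = ⊤ then (if m = 0 then 0 else Nat.nth (keptStep comp J π) (m - 1) + 1)
      else π.len.toNat
    ⟨(m : ℕ∞),
     fun n => projSet P comp J
       (π.state (if n < m then Nat.nth (keptStep comp J π) n else endIdx)),
     fun n => if n < m then π.label (Nat.nth (keptStep comp J π) n) else none⟩

/-- π↾∞J: if π↾J is finite, extend it with infinitely many stuttering steps
(labelled by the non-reaction symbol `*`, represented by `none`). -/
noncomputable def infExtend (π : RPath S) : RPath S :=
  if π.len = ⊤ then π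
  else ⟨⊤, fun n => π.state (min n π.len.toNat),
          fun n => if (n : ℕ∞) < π.len then π.label n else none⟩

/-- A finite or infinite sequence belongs to the LTS of Q iff every step labelled by a
reaction is a transition of that LTS, every stuttering step repeats the current state,
and the sequence is infinite or ends in a state at which no reaction of Q is enabled. -/
def BelongsTo (Q : Set (Reaction S)) (π : RPath S) : Prop :=
  (∀ i : ℕ, (i : ℕ∞) < π.len →
      (∀ R, π.label i = some R → R ∈ Q ∧ Step R (π.state i) (π.state (i + 1))) ∧
      (π.label i = none → π.state (i + 1) = π.state i)) ∧
  (π.len = ⊤ ∨ ∃ n : ℕ, π.len = (n : ℕ∞) ∧ ∀ R ∈ Q, ¬ enabled R (π.state n))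

/-- ACTL⁻ formulas. -/
inductive ACTL (S : Type*) where
  | tt : ACTL S
  | ff : ACTL S
  | atom (s : S) : ACTL S
  | natom (s : S) : ACTL S
  | and (f g : ACTL S) : ACTL S
  | or (f g : ACTL S) : ACTL S
  | au (f g : ACTL S) : ACTL S
  | auw (f g : ACTL S) : ACTL S

/-- The atomic propositions occurring in an ACTL⁻ formula. -/
def atoms {S : Type*} : ACTL S → Set S
  | .tt => ∅
  | .ff => ∅
  | .atom s => {s}
  | .natom s => {s}
  | .and f g => atoms f ∪ atoms g
  | .or f g => atoms f ∪ atoms g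
  | .au f g => atoms f ∪ atoms g
  | .auw f g => atoms f ∪ atoms g

/-- Satisfaction of an ACTL⁻ formula at a state, relative to a set `D` of designated
maximal paths: path quantifiers range over the paths of `D` starting at the state. -/
def Sat {S : Type*} (D : Set (RPath S)) : ACTL S → Set S → Prop
  | .tt, _ => True
  | .ff, _ => False
  | .atom a, t => a ∈ t
  | .natom a, t => a ∉ t
  | .and f g, t => Sat D f t ∧ Sat D g t
  | .or f g, t => Sat D f t ∨ Sat D g t
  | .au f g, t => ∀ π ∈ D, π.state 0 = t →
      ∃ m : ℕ, (m : ℕ∞) ≤ π.len ∧ Sat D g (π.state m) ∧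
        ∀ m' < m, Sat D f (π.state m')
  | .auw f g, t => ∀ π ∈ D, π.state 0 = t →
      ∀ m : ℕ, (m : ℕ∞) ≤ π.len →
        (∀ m' < m, ¬ Sat D g (π.state m')) → Sat D f (π.state m)

/-- The suffix of a path starting at its k-th state. -/
def suffixPath (π : RPath S) (k : ℕ) : RPath S :=
  ⟨π.len - (k : ℕ∞), fun n => π.state (k + n), fun n => π.label (k + n)⟩

/-- The four species of the motivating example. -/
inductive Sp : Type
  | A | B | C | D
deriving DecidableEq

/-- R1 = ({A},{B},{D}) -/
def R1 : Reaction Sp := ⟨{Sp.A}, {Sp.B}, {Sp.D}⟩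
/-- R2 = ({B},{A},{D}) -/
def R2 : Reaction Sp := ⟨{Sp.B}, {Sp.A}, {Sp.D}⟩
/-- R3 = ({A},{C},{D}) -/
def R3 : Reaction Sp := ⟨{Sp.A}, {Sp.C}, {Sp.D}⟩
/-- R4 = ({C},{A},{D}) -/
def R4 : Reaction Sp := ⟨{Sp.C}, {Sp.A}, {Sp.D}⟩

/-- The pathway of the motivating four-reaction example. -/
noncomputable def P4 : Finset (Reaction Sp) := {R1, R2, R3, R4}

/-- The initial state {A, D}. -/
def init4 : Set Sp := {Sp.A, Sp.D}

/-!
Every reachable state is one of `{A, D}`, `{B, D}`, `{C, D}`, and each of them enables a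
reaction, so no maximal path ends. Alternating `R1` and `R2` starves `R3`. Every step out of
`{B, D}` or `{C, D}` leads back to `{A, D}`, so on an infinite path `{A, D}` recurs, and there
both `R1` and `R3` are enabled; fairness therefore forces each of them infinitely often.
-/

theorem step_iff_of_cat_nonempty {R : Reaction S} (hR : R.cat.Nonempty) {s s' : Set S} :
    Step R s s' ↔ enabled R s ∧ s' = (s \ ↑R.re) ∪ ↑R.pro := by
  simp only [Step, enabled, Finset.nonempty_iff_ne_empty.mp hR, ne_eq, not_false_eq_true,
    true_and, false_and, and_false, or_false]
  tauto

theorem infinite_setOf_of_forall_or_succ {p : ℕ → Prop} (hp : ∀ n, p n ∨ p (n + 1)) :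
    {n | p n}.Infinite :=
  Set.infinite_of_forall_exists_gt fun a =>
    (hp (a + 1)).elim (fun h => ⟨a + 1, h, by omega⟩) fun h => ⟨a + 2, h, by omega⟩

section Paths

variable {Q : Set (Reaction S)} {π : RPath S}

theorem IsPath.state_mem_of_step_mem {T : Set (Set S)} (hπ : IsPath Q π)
    (hT : ∀ R ∈ Q, ∀ s ∈ T, ∀ s', Step R s s' → s' ∈ T) (h0 : π.state 0 ∈ T) (i : ℕ)
    (hi : (i : ℕ∞) ≤ π.len) : π.state i ∈ T := by
  induction i with
  | zero => exact h0
  | succ n ih =>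
    have hn : (n : ℕ∞) < π.len := lt_of_lt_of_le (by exact_mod_cast n.lt_succ_self) hi
    obtain ⟨R, -, hRQ, hstep⟩ := hπ n hn
    exact hT R hRQ _ (ih hn.le) _ hstep

theorem IsMaximal.len_eq_top (hπ : IsMaximal Q π)
    (hen : ∀ i : ℕ, (i : ℕ∞) ≤ π.len → ∃ R ∈ Q, enabled R (π.state i)) : π.len = ⊤ := by
  obtain ⟨-, htop | ⟨n, hn, hdead⟩⟩ := hπ
  · exact htop
  · obtain ⟨R, hRQ, hR⟩ := hen n hn.ge
    exact absurd hR (hdead R hRQ)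

theorem FairFor.infinite_label (hfair : FairFor Q π) (hlen : π.len = ⊤) {R : Reaction S}
    (hRQ : R ∈ Q) {s : Set S} (hs : {i : ℕ | π.state i = s}.Infinite) (hen : enabled R s) :
    {i : ℕ | π.label i = some R}.Infinite :=
  (hfair R hRQ (hs.mono fun i (hi : π.state i = s) => ⟨by simp [hlen], hi ▸ hen⟩)).mono
    fun _ hi => hi.2

end Paths

namespace RPath

def twoCycle (s t : Set S) (R R' : Reaction S) : RPath S :=
  ⟨⊤, fun i => if Even i then s else t, fun i => if Even i then some R else some R'⟩

theorem twoCycle_isMaximal {Q : Set (Reaction S)} {s t : Set S} {R R' : Reaction S}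
    (hR : R ∈ Q) (hR' : R' ∈ Q) (hst : Step R s t) (hts : Step R' t s) :
    IsMaximal Q (twoCycle s t R R') := by
  refine ⟨fun i _ => ?_, Or.inl rfl⟩
  rcases Nat.even_or_odd i with hi | hi
  · exact ⟨R, by simp [twoCycle, hi], hR, by simpa [twoCycle, hi, Nat.even_add_one] using hst⟩
  · have hi' : ¬ Even i := Nat.not_even_iff_odd.mpr hi
    exact ⟨R', by simp [twoCycle, hi'], hR', by simpa [twoCycle, hi', Nat.even_add_one] using hts⟩

theorem twoCycle_label_ne {s t : Set S} {R R' R'' : Reaction S} (h : R'' ≠ R) (h' : R'' ≠ R')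
    (i : ℕ) : (twoCycle s t R R').label i ≠ some R'' := by
  by_cases hi : Even i <;> simp [twoCycle, hi, h.symm, h'.symm]

end RPath

def stateBD : Set Sp := {Sp.B, Sp.D}

def stateCD : Set Sp := {Sp.C, Sp.D}

def reach4 : Set (Set Sp) := {init4, stateBD, stateCD}

theorem mem_P4 {R : Reaction Sp} :
    R ∈ (↑P4 : Set (Reaction Sp)) ↔ R = R1 ∨ R = R2 ∨ R = R3 ∨ R = R4 := by
  simp [P4]

theorem step_P4_iff {R : Reaction Sp} (hR : R ∈ (↑P4 : Set (Reaction Sp))) {s s' : Set Sp} :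
    Step R s s' ↔ enabled R s ∧ s' = (s \ ↑R.re) ∪ ↑R.pro :=
  step_iff_of_cat_nonempty <| by
    rcases mem_P4.mp hR with rfl | rfl | rfl | rfl <;> exact ⟨Sp.D, by decide⟩

theorem enabled_R1_init4 : enabled R1 init4 := by simp [enabled, R1, init4]

theorem enabled_R3_init4 : enabled R3 init4 := by simp [enabled, R3, init4]

theorem step_R1_init4 : Step R1 init4 stateBD :=
  (step_P4_iff (by simp [P4])).mpr
    ⟨enabled_R1_init4, by ext x; cases x <;> simp [R1, init4, stateBD]⟩

theorem step_R2_stateBD : Step R2 stateBD init4 :=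
  (step_P4_iff (by simp [P4])).mpr
    ⟨by simp [enabled, R2, stateBD], by ext x; cases x <;> simp [R2, init4, stateBD]⟩

theorem step_P4_of_init4 {R : Reaction Sp} (hR : R ∈ (↑P4 : Set (Reaction Sp))) {s' : Set Sp}
    (h : Step R init4 s') : s' = stateBD ∨ s' = stateCD := by
  obtain ⟨⟨hre, -, -⟩, rfl⟩ := (step_P4_iff hR).mp h
  rcases mem_P4.mp hR with rfl | rfl | rfl | rfl
  · left; ext x; cases x <;> simp [R1, init4, stateBD]
  · simp [R2, init4] at hre
  · right; ext x; cases x <;> simp [R3, init4, stateCD]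
  · simp [R4, init4] at hre

theorem step_P4_to_init4 {R : Reaction Sp} (hR : R ∈ (↑P4 : Set (Reaction Sp)))
    {s s' : Set Sp} (hs : s = stateBD ∨ s = stateCD) (h : Step R s s') : s' = init4 := by
  obtain ⟨⟨hre, hpro, -⟩, rfl⟩ := (step_P4_iff hR).mp h
  rcases hs with rfl | rfl <;> rcases mem_P4.mp hR with rfl | rfl | rfl | rfl <;>
    simp_all [R1, R2, R3, R4, stateBD, stateCD, init4]

theorem step_P4_mem_reach4 {R : Reaction Sp} (hR : R ∈ (↑P4 : Set (Reaction Sp)))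
    {s s' : Set Sp} (hs : s ∈ reach4) (h : Step R s s') : s' ∈ reach4 := by
  rcases hs with rfl | hs
  · exact Or.inr (step_P4_of_init4 hR h)
  · exact Or.inl (step_P4_to_init4 hR hs h)

theorem exists_enabled_P4_of_mem_reach4 {s : Set Sp} (hs : s ∈ reach4) :
    ∃ R ∈ (↑P4 : Set (Reaction Sp)), enabled R s := by
  rcases hs with rfl | rfl | rfl
  · exact ⟨R1, by simp [P4], enabled_R1_init4⟩
  · exact ⟨R2, by simp [P4], by simp [enabled, R2, stateBD]⟩
  · exact ⟨R4, by simp [P4], by simp [enabled, R4, stateCD]⟩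

theorem IsPath.state_mem_reach4 {π : RPath Sp} (hπ : IsPath (↑P4) π) (h0 : π.state 0 = init4)
    (i : ℕ) (hi : (i : ℕ∞) ≤ π.len) : π.state i ∈ reach4 :=
  hπ.state_mem_of_step_mem (fun _ hR _ hs _ => step_P4_mem_reach4 hR hs)
    (by simp [h0, reach4]) i hi

theorem IsPath.infinite_setOf_state_eq_init4 {π : RPath Sp} (hπ : IsPath (↑P4) π)
    (hlen : π.len = ⊤) (h0 : π.state 0 = init4) : {i | π.state i = init4}.Infinite := by
  refine infinite_setOf_of_forall_or_succ fun n => ?_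
  rcases hπ.state_mem_reach4 h0 n (by simp [hlen]) with hn | hn
  · exact Or.inl hn
  · obtain ⟨R, -, hR, hstep⟩ := hπ n (by simp [hlen])
    exact Or.inr (step_P4_to_init4 hR hn hstep)

/-- **Fairness excludes starvation in the motivating four-reaction system.**
(i) every maximal path of `LTS(P4)` from `{A, D}` is infinite; (ii) there is an
infinite maximal path from `{A, D}` in which no step is labelled `R3`; (iii) every
fair maximal path from `{A, D}` has infinitely many steps labelled `R1` and
infinitely many steps labelled `R3`. -/
theorem fairness_excludes_starvation :
    (∀ π : RPath Sp, IsMaximal (↑P4) π → π.state 0 = init4 → π.len = ⊤) ∧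
    (∃ π : RPath Sp, IsMaximal (↑P4) π ∧ π.state 0 = init4 ∧ π.len = ⊤ ∧
      ∀ i : ℕ, π.label i ≠ some R3) ∧
    (∀ π : RPath Sp, IsMaximal (↑P4) π → FairFor (↑P4) π → π.state 0 = init4 →
      {i : ℕ | π.label i = some R1}.Infinite ∧
      {i : ℕ | π.label i = some R3}.Infinite) := by
  have len_eq_top (π : RPath Sp) (hπ : IsMaximal (↑P4) π) (h0 : π.state 0 = init4) :
      π.len = ⊤ :=
    hπ.len_eq_top fun i hi => exists_enabled_P4_of_mem_reach4 (hπ.1.state_mem_reach4 h0 i hi)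
  refine ⟨len_eq_top, ⟨RPath.twoCycle init4 stateBD R1 R2, ?_, rfl, rfl, ?_⟩, ?_⟩
  · exact RPath.twoCycle_isMaximal (by simp [P4]) (by simp [P4]) step_R1_init4 step_R2_stateBD
  · exact RPath.twoCycle_label_ne (by simp [R1, R3]) (by simp [R2, R3])
  · intro π hπ hfair h0
    have hlen := len_eq_top π hπ h0
    have hinit := hπ.1.infinite_setOf_state_eq_init4 hlen h0
    exact ⟨hfair.infinite_label hlen (by simp [P4]) hinit enabled_R1_init4,
      hfair.infinite_label hlen (by simp [P4]) hinit enabled_R3_init4⟩
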